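/- arXiv:2211.13532 — 6 statements merged into one kernel-verified Lean document; each statement's English description precedes it below -/
import Mathlib

section
/- Let A₁,…,A_k be invertible 3×3 rational matrices and let B be the 3×3 matrix with (B)_{1,1} = 1 and all other entries 0. Then the family {A₁,…,A_k, B} is mortal, i.e., there exists a nonempty finite sequence of matrices from {A₁,…,A_k,B} whose product is the zero matrix, if and only if there exists a nonempty finite index sequence i₁,…,i_n ∈ {1,…,k} with (A_{i₁}·A_{i₂}⋯A_{i_n})_{1,1} = 0. -/
/-!
Write `E` for the matrix unit `single i i 1` and `G` for the monoid generated by the invertible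
matrices. Since `E * g * E = g i i • E`, every product of generators and `E` is either in `G` or of
the form `c • (g * E * h)` with `g, h ∈ G`, where `c` is a product of diagonal entries `g' i i` of
elements `g' ∈ G`. If none of these entries vanishes, no such product is zero, because `g` and `h`
are invertible. Conversely, if `g i i = 0` for some `g ∈ G`, then `E * g * E = 0`.
-/

/-- The rank-one matrix `B` with a single `1` in the upper-left corner. -/
def Bmat : Matrix (Fin 3) (Fin 3) ℚ :=
  !![1, 0, 0;
     0, 0, 0;
     0, 0, 0]

namespace Submonoid

variable {M : Type*} [Monoid M]

theorem exists_ofFn_prod_iff {s : Set M} {p : M → Prop} (hp : ¬ p 1) :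
    (∃ n, 1 ≤ n ∧ ∃ f : Fin n → M, (∀ j, f j ∈ s) ∧ p (List.ofFn f).prod) ↔
      ∃ x ∈ closure s, p x := by
  constructor
  · rintro ⟨n, -, f, hf, hpf⟩
    refine ⟨_, list_prod_mem _ fun x hx => ?_, hpf⟩
    obtain ⟨j, rfl⟩ := List.mem_ofFn.mp hx
    exact subset_closure (hf j)
  · rintro ⟨x, hx, hpx⟩
    obtain ⟨l, hl, rfl⟩ := exists_list_of_mem_closure hx
    have hl_ne : l ≠ [] := by
      rintro rfl
      exact hp hpx
    refine ⟨l.length, List.length_pos_iff.mpr hl_ne, l.get, fun j => hl _ (l.get_mem j), ?_⟩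
    rwa [List.ofFn_get]

theorem exists_ofFn_comp_prod_iff {ι : Type*} (A : ι → M) {p : M → Prop} (hp : ¬ p 1) :
    (∃ n, 1 ≤ n ∧ ∃ idx : Fin n → ι, p (List.ofFn fun j => A (idx j)).prod) ↔
      ∃ x ∈ closure (Set.range A), p x := by
  rw [← exists_ofFn_prod_iff hp]
  constructor
  · rintro ⟨n, hn, idx, h⟩
    exact ⟨n, hn, _, fun j => Set.mem_range_self (idx j), h⟩
  · rintro ⟨n, hn, f, hf, h⟩
    choose idx hidx using hf
    refine ⟨n, hn, idx, ?_⟩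
    rwa [show (fun j => A (idx j)) = f from funext hidx]

end Submonoid

namespace Matrix

open Submonoid

variable {n R : Type*} [Fintype n] [DecidableEq n] [CommRing R]

theorem single_one_mul_mul_single_one (i : n) (x : Matrix n n R) :
    single i i (1 : R) * x * single i i 1 = x i i • single i i 1 := by
  rw [single_mul_mul_single, smul_single, one_mul, mul_one, smul_eq_mul, mul_one]

variable [IsDomain R]

theorem mem_closure_or_eq_smul_mul_single_mul {s : Set (Matrix n n R)} {i : n}
    (hs : ∀ g ∈ closure s, g i i ≠ 0) {x : Matrix n n R}
    (hx : x ∈ closure (insert (single i i 1) s)) :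
    x ∈ closure s ∨ ∃ c ≠ (0 : R), ∃ g ∈ closure s, ∃ h ∈ closure s,
      x = c • (g * single i i 1 * h) := by
  induction hx using closure_induction_left with
  | one => exact .inl (one_mem _)
  | mul_left a ha y _ ih =>
    rcases Set.mem_insert_iff.mp ha with rfl | ha
    · rcases ih with hy | ⟨c, hc, g, hg, h, hh, rfl⟩
      · exact .inr ⟨1, one_ne_zero, 1, one_mem _, y, hy, by rw [one_smul, one_mul]⟩
      · refine .inr ⟨c * g i i, mul_ne_zero hc (hs g hg), 1, one_mem _, h, hh, ?_⟩
        rw [mul_smul_comm, ← mul_assoc, ← mul_assoc, single_one_mul_mul_single_one, smul_mul,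
          smul_smul, one_mul]
    · rcases ih with hy | ⟨c, hc, g, hg, h, hh, rfl⟩
      · exact .inl (mul_mem (subset_closure ha) hy)
      · refine .inr ⟨c, hc, a * g, mul_mem (subset_closure ha) hg, h, hh, ?_⟩
        rw [mul_smul_comm, mul_assoc, mul_assoc, mul_assoc]

theorem zero_mem_closure_insert_single_one_iff {s : Set (Matrix n n R)}
    (hs : ∀ a ∈ s, IsUnit a) (i : n) :
    0 ∈ closure (insert (single i i 1) s) ↔ ∃ g ∈ closure s, g i i = 0 := by
  have : Nonempty n := ⟨i⟩
  have hunit : ∀ g ∈ closure s, IsUnit g := fun g hg =>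
    (IsUnit.mem_submonoid_iff g).mp ((closure_le (S := IsUnit.submonoid _)).mpr hs hg)
  constructor
  · intro h0
    by_contra! hne
    rcases mem_closure_or_eq_smul_mul_single_mul hne h0 with h | ⟨c, hc, g, hg, h, hh, hzero⟩
    · exact (hunit 0 h).ne_zero rfl
    · have hsingle : single i i (1 : R) ≠ 0 := fun hE => by
        simpa using congrFun₂ hE i i
      refine smul_ne_zero hc (fun hz => hsingle ?_) hzero.symm
      rwa [(hunit h hh).mul_left_eq_zero, (hunit g hg).mul_right_eq_zero] at hz
  · rintro ⟨g, hg, hgi⟩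
    have hE : single i i (1 : R) ∈ closure (insert (single i i 1) s) :=
      subset_closure (Set.mem_insert _ _)
    have hg' : g ∈ closure (insert (single i i 1) s) := closure_mono (Set.subset_insert _ _) hg
    simpa [single_one_mul_mul_single_one, hgi] using mul_mem (mul_mem hE hg') hE

end Matrix

theorem Bmat_eq_single : Bmat = Matrix.single 0 0 1 := by
  ext i j
  fin_cases i <;> fin_cases j <;> rfl

theorem mortal_iff_zulc {k : ℕ} (A : Fin k → Matrix (Fin 3) (Fin 3) ℚ)
    (hA : ∀ i, IsUnit (A i)) :
    (∃ (n : ℕ), 1 ≤ n ∧ ∃ M : Fin n → Matrix (Fin 3) (Fin 3) ℚ,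
      (∀ j : Fin n, (∃ i, M j = A i) ∨ M j = Bmat) ∧ (List.ofFn M).prod = 0) ↔
    (∃ (n : ℕ), 1 ≤ n ∧ ∃ idx : Fin n → Fin k,
      (List.ofFn fun j => A (idx j)).prod 0 0 = 0) := by
  have hgen : ∀ X, ((∃ i, X = A i) ∨ X = Bmat) ↔ X ∈ insert Bmat (Set.range A) := by
    simp [eq_comm, or_comm]
  simp_rw [hgen]
  rw [Submonoid.exists_ofFn_prod_iff (p := (· = 0)) one_ne_zero,
    Submonoid.exists_ofFn_comp_prod_iff A (p := fun x => x 0 0 = 0) (by simp),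
    ← Matrix.zero_mem_closure_insert_single_one_iff (by rintro _ ⟨i, rfl⟩; exact hA i),
    ← Bmat_eq_single, exists_eq_right]
end

section
/- Let A₁,…,A_k be invertible 3×3 rational matrices and let B be the 3×3 matrix with (B)_{1,1} = 1 and all other entries 0. In ℕ∞, let m₀ = sInf {ℓ ≥ 1 | some product of ℓ matrices chosen (with repetition) from {A₁,…,A_k,B} equals the zero matrix} and n₀ = sInf {n ≥ 1 | some product A_{i₁}⋯A_{i_n} of n matrices from {A₁,…,A_k} has (·)_{1,1} = 0}. Then m₀ = n₀ + 2. -/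
open Matrix

section Mortality

variable {n R ι : Type*} [Fintype n] [DecidableEq n] [Semiring R] {A : ι → Matrix n n R} (i : n)

theorem prod_single_cons_append_single_eq_zero {l : List (Matrix n n R)} (hl : l.prod i i = 0) :
    (single i i 1 :: l ++ [single i i 1]).prod = 0 := by
  simp [← mul_assoc, hl]

variable [IsDomain R]

theorem exists_diag_eq_zero_of_single_mul_prod_eq_zero (hA : ∀ a, IsUnit (A a))
    (L : List (Matrix n n R)) (hL : ∀ x ∈ L, (∃ a, x = A a) ∨ x = single i i 1) (J : List ι)
    (hJL : single i i 1 * (J.map A).prod * L.prod = 0) :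
    ∃ w : List ι, w.length + 1 ≤ J.length + L.length ∧ (w.map A).prod i i = 0 := by
  -- `J` is the run of units read since the last letter `single i i 1`.
  induction L generalizing J with
  | nil =>
    have hJ : IsUnit (J.map A).prod := List.prod_isUnit (by simpa using fun a _ => hA a)
    rw [List.prod_nil, mul_one, hJ.mul_left_eq_zero] at hJL
    simpa using congrFun (congrFun hJL i) i
  | cons x L ih =>
    obtain ⟨hx, hxL⟩ := List.forall_mem_cons.mp hL
    rcases hx with ⟨a, rfl⟩ | rfl
    · obtain ⟨w, hw, hw0⟩ := ih hxL (J ++ [a]) (by simpa [mul_assoc] using hJL)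
      exact ⟨w, by simp at hw ⊢; omega, hw0⟩
    · have hsandwich : single i i 1 * (J.map A).prod * single i i 1 =
          (J.map A).prod i i • single i i (1 : R) := by
        simp [smul_single]
      rw [List.prod_cons, ← mul_assoc, hsandwich, smul_mul_assoc] at hJL
      rcases smul_eq_zero.mp hJL with hJ | hL0
      · exact ⟨J, by simp, hJ⟩
      · obtain ⟨w, hw, hw0⟩ := ih hxL [] (by simpa using hL0)
        exact ⟨w, by simp at hw ⊢; omega, hw0⟩

theorem exists_diag_eq_zero_of_prod_eq_zero (hA : ∀ a, IsUnit (A a))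
    (L : List (Matrix n n R)) (hL : ∀ x ∈ L, (∃ a, x = A a) ∨ x = single i i 1)
    (hL0 : L.prod = 0) :
    ∃ w : List ι, w.length + 2 ≤ L.length ∧ (w.map A).prod i i = 0 := by
  induction L with
  | nil => simpa using congrFun (congrFun hL0 i) i
  | cons x L ih =>
    obtain ⟨hx, hxL⟩ := List.forall_mem_cons.mp hL
    rcases hx with ⟨a, rfl⟩ | rfl
    · obtain ⟨w, hw, hw0⟩ := ih hxL (by simpa [(hA a).mul_right_eq_zero] using hL0)
      exact ⟨w, by simp; omega, hw0⟩
    · obtain ⟨w, hw, hw0⟩ :=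
        exists_diag_eq_zero_of_single_mul_prod_eq_zero i hA L hxL [] (by simpa using hL0)
      exact ⟨w, by simp at hw ⊢; omega, hw0⟩

end Mortality

theorem ENat.sInf_eq_sInf_add {X Y : Set ℕ∞} (c : ℕ∞) (hYX : ∀ y ∈ Y, y + c ∈ X)
    (hXY : ∀ x ∈ X, ∃ y ∈ Y, y + c ≤ x) : sInf X = sInf Y + c := by
  refine le_antisymm ?_ (le_sInf fun x hx => ?_)
  · rcases Y.eq_empty_or_nonempty with rfl | hY
    · simp
    · exact sInf_le (hYX _ (csInf_mem hY))
  · obtain ⟨y, hy, hyx⟩ := hXY x hx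
    exact le_trans (by gcongr; exact sInf_le hy) hyx

theorem Bmat_eq_single_s10 : Bmat = (single 0 0 1 : Matrix (Fin 3) (Fin 3) ℚ) := by
  ext i j
  fin_cases i <;> fin_cases j <;> simp [Bmat, single]

theorem mortality_threshold {k : ℕ} (A : Fin k → Matrix (Fin 3) (Fin 3) ℚ)
    (hA : ∀ i, IsUnit (A i)) :
    sInf {ℓ : ℕ∞ | ∃ m : ℕ, ℓ = (m : ℕ∞) ∧ 1 ≤ m ∧
        ∃ M : Fin m → Matrix (Fin 3) (Fin 3) ℚ,
          (∀ j : Fin m, (∃ i, M j = A i) ∨ M j = Bmat) ∧ (List.ofFn M).prod = 0} =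
      sInf {ℓ : ℕ∞ | ∃ n : ℕ, ℓ = (n : ℕ∞) ∧ 1 ≤ n ∧
        ∃ idx : Fin n → Fin k,
          (List.ofFn fun j => A (idx j)).prod 0 0 = 0} + 2 := by
  rw [Bmat_eq_single_s10]
  refine ENat.sInf_eq_sInf_add 2 ?_ ?_
  · rintro _ ⟨n, rfl, -, idx, hidx⟩
    set L := single 0 0 1 :: List.ofFn (fun j => A (idx j)) ++ [single 0 0 1]
    refine ⟨L.length, by simp [L, add_assoc, one_add_one_eq_two], by simp [L], L.get,
      fun j => ?_, ?_⟩
    · obtain ⟨x, hx, hjx⟩ : ∃ x ∈ L, L.get j = x := ⟨_, List.get_mem L j, rfl⟩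
      simp only [L, List.cons_append, List.mem_cons, List.mem_append, List.mem_ofFn,
        List.not_mem_nil, or_false] at hx
      rw [hjx]
      rcases hx with rfl | ⟨a, rfl⟩ | rfl <;> simp
    · rw [List.ofFn_get]
      exact prod_single_cons_append_single_eq_zero 0 hidx
  · rintro _ ⟨m, rfl, -, M, hM, hprod⟩
    obtain ⟨w, hw, hw0⟩ := exists_diag_eq_zero_of_prod_eq_zero 0 hA (List.ofFn M)
      (by simpa [List.mem_ofFn] using hM) hprod
    rw [List.length_ofFn] at hw
    refine ⟨w.length, ⟨w.length, rfl, List.length_pos_iff.mpr ?_, w.get, by simpa using hw0⟩,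
      by exact_mod_cast hw⟩
    rintro rfl
    simp at hw0
end

section
/- Let A₁,…,A_k be D×D integer matrices. For i ∈ {1,…,k} define the (D²+1)×(D²+1) block matrix B_i = fromBlocks (A_i ⊗ A_i) 0 0 1, where A_i ⊗ A_i is the Kronecker product and the lower-right block is the 1×1 matrix (1); define B_{k+1} = fromBlocks E₁₁ 0 0 (−1), where E₁₁ is the D²×D² matrix with a single 1 in the upper-left corner. Then for every index sequence i₁,…,i_n ∈ {1,…,k}: tr(B_{i₁}·B_{i₂}⋯B_{i_n}·B_{k+1}) = ((A_{i₁}·A_{i₂}⋯A_{i_n})_{1,1})² − 1, and tr(B_{i₁}·B_{i₂}⋯B_{i_n}) = (tr(A_{i₁}⋯A_{i_n}))² + 1. -/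
/-- The block matrix `Bᵢ = fromBlocks (Aᵢ ⊗ Aᵢ) 0 0 1`. -/
def blockB {D : ℕ} (A : Matrix (Fin D) (Fin D) ℤ) :
    Matrix ((Fin D × Fin D) ⊕ Unit) ((Fin D × Fin D) ⊕ Unit) ℤ :=
  Matrix.fromBlocks (Matrix.kroneckerMap (· * ·) A A) 0 0 1

/-- The block matrix `B_{k+1} = fromBlocks E₁₁ 0 0 (-1)`, where `E₁₁` has a single
`1` in the upper-left corner. -/
def blockLast {D : ℕ} (hD : 0 < D) :
    Matrix ((Fin D × Fin D) ⊕ Unit) ((Fin D × Fin D) ⊕ Unit) ℤ :=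
  Matrix.fromBlocks
    (Matrix.single ((⟨0, hD⟩ : Fin D), (⟨0, hD⟩ : Fin D))
      ((⟨0, hD⟩ : Fin D), (⟨0, hD⟩ : Fin D)) 1) 0 0 (-1)

/-! `A ↦ A ⊗ A ⊕ 1` is multiplicative, so a product of the `Bᵢ` is the block matrix of the
product of the `Aᵢ`; its trace is `tr (P ⊗ P) + 1 = (tr P)² + 1`, and multiplying by `B_{k+1}`
picks out the diagonal entry `(P ⊗ P)_{(1,1),(1,1)} = (P₁₁)²` of the upper block and negates
the `1` of the lower one. -/

open Matrix

theorem Matrix.trace_fromBlocks {l m α : Type*} [Fintype l] [Fintype m] [AddCommMonoid α]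
    (A : Matrix l l α) (B : Matrix l m α) (C : Matrix m l α) (D : Matrix m m α) :
    trace (fromBlocks A B C D) = trace A + trace D :=
  Fintype.sum_sum_type _

section

variable {D : ℕ}

theorem blockB_mul (M N : Matrix (Fin D) (Fin D) ℤ) : blockB M * blockB N = blockB (M * N) := by
  simp only [blockB, fromBlocks_multiply, mul_kronecker_mul, Matrix.mul_zero, Matrix.zero_mul,
    Matrix.mul_one, add_zero, zero_add]

theorem blockB_one : blockB (1 : Matrix (Fin D) (Fin D) ℤ) = 1 := by
  rw [blockB, one_kronecker_one, fromBlocks_one]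

theorem blockB_list_prod (l : List (Matrix (Fin D) (Fin D) ℤ)) :
    (l.map blockB).prod = blockB l.prod := by
  induction l with
  | nil => exact blockB_one.symm
  | cons M l ih => rw [List.map_cons, List.prod_cons, List.prod_cons, ih, blockB_mul]

theorem trace_blockB (M : Matrix (Fin D) (Fin D) ℤ) : trace (blockB M) = trace M ^ 2 + 1 := by
  rw [blockB, trace_fromBlocks, trace_kronecker, trace_one, Fintype.card_unit, sq, Nat.cast_one]

theorem trace_blockB_mul_blockLast (hD : 0 < D) (M : Matrix (Fin D) (Fin D) ℤ) :
    trace (blockB M * blockLast hD) = M ⟨0, hD⟩ ⟨0, hD⟩ ^ 2 - 1 := by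
  rw [blockB, blockLast, fromBlocks_multiply, trace_fromBlocks]
  simp [trace_mul_single, sq, sub_eq_add_neg]

end

theorem block_traces {D k : ℕ} (hD : 0 < D) (A : Fin k → Matrix (Fin D) (Fin D) ℤ)
    (n : ℕ) (idx : Fin n → Fin k) :
    Matrix.trace ((List.ofFn fun j => blockB (A (idx j))).prod * blockLast hD) =
      ((List.ofFn fun j => A (idx j)).prod ⟨0, hD⟩ ⟨0, hD⟩) ^ 2 - 1 ∧
    Matrix.trace ((List.ofFn fun j => blockB (A (idx j))).prod) =
      (Matrix.trace ((List.ofFn fun j => A (idx j)).prod)) ^ 2 + 1 := by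
  have hprod : (List.ofFn fun j => blockB (A (idx j))).prod =
      blockB (List.ofFn fun j => A (idx j)).prod := by
    rw [← blockB_list_prod, List.map_ofFn]
    rfl
  rw [hprod]
  exact ⟨trace_blockB_mul_blockLast hD _, trace_blockB _⟩
end

section
/- Let A₁,…,A_k be D×D integer matrices, and define B₁,…,B_k, B_{k+1} as the (D²+1)×(D²+1) integer block matrices B_i = fromBlocks (A_i ⊗ A_i) 0 0 1 for i ≤ k and B_{k+1} = fromBlocks E₁₁ 0 0 (−1). In ℕ∞, let n₀ = sInf {n ≥ 1 | ∃ i₁,…,i_n ∈ {1,…,k} with (A_{i₁}⋯A_{i_n})_{1,1} = 0} and m₀ = sInf {m ≥ 1 | ∃ j₁,…,j_m ∈ {1,…,k+1} with tr(B_{j₁}⋯B_{j_m}) < 0}. Then m₀ = n₀ + 1. -/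
/-- The family `B₁,…,B_k,B_{k+1}`: `Bᵢ = fromBlocks (Aᵢ ⊗ Aᵢ) 0 0 1` for `i ≤ k` and
`B_{k+1} = fromBlocks E₁₁ 0 0 (-1)`. -/
def blockFam {D k : ℕ} (hD : 0 < D) (A : Fin k → Matrix (Fin D) (Fin D) ℤ)
    (i : Fin (k + 1)) :
    Matrix ((Fin D × Fin D) ⊕ Unit) ((Fin D × Fin D) ⊕ Unit) ℤ :=
  if h : (i : ℕ) < k then
    Matrix.fromBlocks (Matrix.kroneckerMap (· * ·) (A ⟨i, h⟩) (A ⟨i, h⟩)) 0 0 1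
  else
    Matrix.fromBlocks
      (Matrix.single ((⟨0, hD⟩ : Fin D), (⟨0, hD⟩ : Fin D))
        ((⟨0, hD⟩ : Fin D), (⟨0, hD⟩ : Fin D)) 1) 0 0 (-1)

/-!
The matrices `Bᵢ` are block diagonal, so `tr(B_{j₁}⋯B_{j_m})` is the trace of a product of
matrices `Aᵢ ⊗ Aᵢ` and `E₁₁`, plus a sign `±1`. Without the letter `k+1` it equals
`(tr P)² + 1 > 0`, `P` a product of the `Aᵢ`. Otherwise cyclicity moves an occurrence of `B_{k+1}`
to the front, and `tr(E₁₁ M) = M₁₁`; since `(X E₁₁ Y)₁₁ = X₁₁ Y₁₁`, this corner entry is a product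
of squares `((A_{i₁}⋯A_{i_n})₁₁)²` over the maximal runs of letters `≤ k`, each of length at most
`m - 1`. So a negative trace forces a run with vanishing corner entry, and conversely a word with
`(A_{i₁}⋯A_{i_n})₁₁ = 0` gives `tr(B_{k+1} B_{i₁}⋯B_{i_n}) = -1`.
-/

open Matrix
open scoped Kronecker

theorem ENat.sInf_eq_sInf_add_one {S T : Set ℕ∞} (hT : ∀ n ∈ T, n + 1 ∈ S)
    (hS : ∀ m ∈ S, ∃ n ∈ T, n + 1 ≤ m) : sInf S = sInf T + 1 := by
  rw [ENat.sInf_add]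
  refine le_antisymm (le_iInf₂ fun n hn => sInf_le (hT n hn)) (le_sInf fun m hm => ?_)
  obtain ⟨n, hn, hle⟩ := hS m hm
  exact (iInf₂_le n hn).trans hle

theorem List.exists_eq_map_castSucc_of_last_notMem {k : ℕ} {l : List (Fin (k + 1))}
    (h : Fin.last k ∉ l) : ∃ w : List (Fin k), l = w.map Fin.castSucc := by
  induction l with
  | nil => exact ⟨[], rfl⟩
  | cons a l ih =>
    obtain ⟨w, rfl⟩ := ih (fun hl => h (List.mem_cons_of_mem a hl))
    have ha : a ≠ Fin.last k := fun ha => h (ha ▸ List.mem_cons_self)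
    exact ⟨a.castPred ha :: w, by simp⟩

namespace Matrix

variable {ι m n R : Type*} [Fintype m] [Fintype n]

theorem trace_fromBlocks_zero_zero [AddCommMonoid R] (X : Matrix m m R)
    (Y : Matrix n n R) : trace (fromBlocks X 0 0 Y) = trace X + trace Y := by
  simp [trace, Fintype.sum_sum_type]

theorem list_prod_map_fromBlocks_zero_zero [DecidableEq m] [DecidableEq n] [Semiring R]
    (X : ι → Matrix m m R) (Y : ι → Matrix n n R) (s : List ι) :
    (s.map fun i => fromBlocks (X i) 0 0 (Y i)).prod =
      fromBlocks (s.map X).prod 0 0 (s.map Y).prod := by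
  induction s with
  | nil => simp
  | cons a s ih => simp [ih, fromBlocks_multiply]

theorem list_prod_map_kronecker [DecidableEq m] [DecidableEq n] [CommSemiring R]
    (X : ι → Matrix m m R) (Y : ι → Matrix n n R) (s : List ι) :
    (s.map fun i => X i ⊗ₖ Y i).prod = (s.map X).prod ⊗ₖ (s.map Y).prod := by
  induction s with
  | nil => simp
  | cons a s ih => simp [ih, mul_kronecker_mul]

theorem mul_single_one_mul_apply_same [DecidableEq m] [NonAssocSemiring R]
    (X Y : Matrix m m R) (i : m) :
    (X * single i i (1 : R) * Y) i i = X i i * Y i i := by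
  rw [mul_apply, Finset.sum_eq_single i
    (fun j _ hj => by simp [mul_single_apply_of_ne _ _ _ _ _ hj]) (by simp)]
  simp

end Matrix

namespace blockFam

variable {D k : ℕ} (hD : 0 < D) (A : Fin k → Matrix (Fin D) (Fin D) ℤ)

def corner : Fin D × Fin D := (⟨0, hD⟩, ⟨0, hD⟩)

def topBlock (i : Fin (k + 1)) : Matrix (Fin D × Fin D) (Fin D × Fin D) ℤ :=
  Fin.lastCases (single (corner hD) (corner hD) 1) (fun j => A j ⊗ₖ A j) i

def bottomBlock (i : Fin (k + 1)) : Matrix Unit Unit ℤ :=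
  Fin.lastCases (-1) (fun _ => 1) i

def cornerEntry (s : List (Fin (k + 1))) : ℤ :=
  (s.map (topBlock hD A)).prod (corner hD) (corner hD)

theorem eq_fromBlocks (i : Fin (k + 1)) :
    blockFam hD A i = fromBlocks (topBlock hD A i) 0 0 (bottomBlock i) := by
  cases i using Fin.lastCases <;> simp [blockFam, topBlock, bottomBlock, corner]

theorem trace_list_prod (s : List (Fin (k + 1))) :
    trace (s.map (blockFam hD A)).prod =
      trace (s.map (topBlock hD A)).prod + trace (s.map bottomBlock).prod := by
  rw [funext (eq_fromBlocks hD A), list_prod_map_fromBlocks_zero_zero, trace_fromBlocks_zero_zero]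

theorem list_prod_bottomBlock_eq_one_or_neg_one (s : List (Fin (k + 1))) :
    (s.map bottomBlock).prod = 1 ∨ (s.map bottomBlock).prod = -1 := by
  refine List.prod_induction (fun M => M = 1 ∨ M = -1) (fun M N hM hN => ?_) (Or.inl rfl)
    (fun M hM => ?_)
  · rcases hM with rfl | rfl <;> rcases hN with rfl | rfl <;> simp
  · obtain ⟨i, -, rfl⟩ := List.mem_map.mp hM
    cases i using Fin.lastCases <;> simp [bottomBlock]

theorem list_prod_map_castSucc_topBlock (w : List (Fin k)) :
    ((w.map Fin.castSucc).map (topBlock hD A)).prod = (w.map A).prod ⊗ₖ (w.map A).prod := by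
  simp [Function.comp_def, topBlock, list_prod_map_kronecker]

theorem list_prod_map_castSucc_bottomBlock (w : List (Fin k)) :
    ((w.map Fin.castSucc).map bottomBlock).prod = 1 := by
  simp [Function.comp_def, bottomBlock]

theorem cornerEntry_map_castSucc (w : List (Fin k)) :
    cornerEntry hD A (w.map Fin.castSucc) = (w.map A).prod ⟨0, hD⟩ ⟨0, hD⟩ ^ 2 := by
  rw [cornerEntry, list_prod_map_castSucc_topBlock]
  simp [corner, sq]

theorem cornerEntry_append_last_cons (s t : List (Fin (k + 1))) :
    cornerEntry hD A (s ++ Fin.last k :: t) = cornerEntry hD A s * cornerEntry hD A t := by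
  simp [cornerEntry, ← mul_assoc, topBlock, mul_single_one_mul_apply_same]

theorem exists_cornerEntry_eq_prod_sq (w : List (Fin k)) (s : List (Fin (k + 1))) :
    ∃ ws : List (List (Fin k)), (∀ u ∈ ws, u.length ≤ w.length + s.length) ∧
      cornerEntry hD A (w.map Fin.castSucc ++ s) =
        (ws.map fun u => (u.map A).prod ⟨0, hD⟩ ⟨0, hD⟩ ^ 2).prod := by
  induction s generalizing w with
  | nil => exact ⟨[w], by simp, by simp [cornerEntry_map_castSucc]⟩
  | cons a s ih =>
    cases a using Fin.lastCases with
    | last =>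
      obtain ⟨ws, hlen, heq⟩ := ih []
      refine ⟨w :: ws, ?_, ?_⟩
      · simp only [List.mem_cons, forall_eq_or_imp, List.length_cons]
        exact ⟨by omega, fun u hu => by have := hlen u hu; rw [List.length_nil] at this; omega⟩
      · rw [cornerEntry_append_last_cons, cornerEntry_map_castSucc, ← List.nil_append s,
          ← List.map_nil (f := Fin.castSucc), heq, List.map_cons, List.prod_cons]
    | cast j =>
      obtain ⟨ws, hlen, heq⟩ := ih (w ++ [j])
      refine ⟨ws, fun u hu => (hlen u hu).trans ?_, ?_⟩
      · simp only [List.length_append, List.length_cons, List.length_nil]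
        omega
      · rw [← heq]
        simp

theorem cornerEntry_nonneg (s : List (Fin (k + 1))) : 0 ≤ cornerEntry hD A s := by
  obtain ⟨ws, -, h⟩ := exists_cornerEntry_eq_prod_sq hD A [] s
  rw [List.map_nil, List.nil_append] at h
  rw [h]
  exact List.prod_nonneg fun x hx => by
    obtain ⟨u, -, rfl⟩ := List.mem_map.mp hx
    positivity

theorem exists_corner_eq_zero_of_cornerEntry_eq_zero {s : List (Fin (k + 1))}
    (h : cornerEntry hD A s = 0) :
    ∃ w : List (Fin k), w ≠ [] ∧ w.length ≤ s.length ∧ (w.map A).prod ⟨0, hD⟩ ⟨0, hD⟩ = 0 := by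
  obtain ⟨ws, hlen, heq⟩ := exists_cornerEntry_eq_prod_sq hD A [] s
  rw [List.map_nil, List.nil_append] at heq
  rw [heq, List.prod_eq_zero_iff, List.mem_map] at h
  obtain ⟨u, hu, hzero⟩ := h
  refine ⟨u, ?_, by simpa using hlen u hu, pow_eq_zero_iff two_ne_zero |>.mp hzero⟩
  rintro rfl
  simp at hzero

theorem trace_list_prod_last_cons (s : List (Fin (k + 1))) :
    trace ((Fin.last k :: s).map (blockFam hD A)).prod =
      cornerEntry hD A s - trace (s.map bottomBlock).prod := by
  rw [trace_list_prod]
  simp [topBlock, bottomBlock, trace_single_mul, cornerEntry, corner, sub_eq_add_neg]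

theorem trace_list_prod_pos_of_last_notMem {s : List (Fin (k + 1))} (h : Fin.last k ∉ s) :
    0 < trace (s.map (blockFam hD A)).prod := by
  obtain ⟨w, rfl⟩ := List.exists_eq_map_castSucc_of_last_notMem h
  rw [trace_list_prod, list_prod_map_castSucc_topBlock, list_prod_map_castSucc_bottomBlock,
    trace_kronecker]
  simp only [trace_one, Fintype.card_unit, Nat.cast_one]
  exact add_pos_of_nonneg_of_pos (mul_self_nonneg _) one_pos

theorem exists_corner_eq_zero_of_trace_neg {s : List (Fin (k + 1))}
    (h : trace (s.map (blockFam hD A)).prod < 0) :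
    ∃ w : List (Fin k), w ≠ [] ∧ w.length + 1 ≤ s.length ∧
      (w.map A).prod ⟨0, hD⟩ ⟨0, hD⟩ = 0 := by
  have hlast : Fin.last k ∈ s := by
    by_contra hs
    exact (trace_list_prod_pos_of_last_notMem hD A hs).not_gt h
  obtain ⟨s₁, s₂, rfl⟩ := List.append_of_mem hlast
  have hrot : trace ((s₁ ++ Fin.last k :: s₂).map (blockFam hD A)).prod =
      trace ((Fin.last k :: (s₂ ++ s₁)).map (blockFam hD A)).prod := by
    simp only [List.map_append, List.map_cons, List.prod_append, List.prod_cons]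
    rw [trace_mul_comm, mul_assoc]
  rw [hrot, trace_list_prod_last_cons] at h
  have hzero : cornerEntry hD A (s₂ ++ s₁) = 0 := by
    have := cornerEntry_nonneg hD A (s₂ ++ s₁)
    rcases list_prod_bottomBlock_eq_one_or_neg_one (s₂ ++ s₁) with h' | h' <;>
      rw [h'] at h <;>
      simp only [trace_one, trace_neg, Fintype.card_unit, Nat.cast_one] at h <;> omega
  obtain ⟨w, hw, hlen, hw0⟩ := exists_corner_eq_zero_of_cornerEntry_eq_zero hD A hzero
  exact ⟨w, hw, by simp only [List.length_append, List.length_cons] at hlen ⊢; omega, hw0⟩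

theorem trace_list_prod_last_cons_map_castSucc {w : List (Fin k)}
    (h : (w.map A).prod ⟨0, hD⟩ ⟨0, hD⟩ = 0) :
    trace ((Fin.last k :: w.map Fin.castSucc).map (blockFam hD A)).prod = -1 := by
  rw [trace_list_prod_last_cons, cornerEntry_map_castSucc, list_prod_map_castSucc_bottomBlock, h]
  simp

end blockFam

theorem mpo_threshold {D k : ℕ} (hD : 0 < D) (A : Fin k → Matrix (Fin D) (Fin D) ℤ) :
    sInf {ℓ : ℕ∞ | ∃ m : ℕ, ℓ = (m : ℕ∞) ∧ 1 ≤ m ∧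
        ∃ idx : Fin m → Fin (k + 1),
          Matrix.trace ((List.ofFn fun j => blockFam hD A (idx j)).prod) < 0} =
      sInf {ℓ : ℕ∞ | ∃ n : ℕ, ℓ = (n : ℕ∞) ∧ 1 ≤ n ∧
        ∃ idx : Fin n → Fin k,
          (List.ofFn fun j => A (idx j)).prod ⟨0, hD⟩ ⟨0, hD⟩ = 0} + 1 := by
  refine ENat.sInf_eq_sInf_add_one ?_ ?_
  · rintro _ ⟨n, rfl, -, idx, hzero⟩
    refine ⟨n + 1, by push_cast; rfl, by omega, Fin.cons (Fin.last k) (Fin.castSucc ∘ idx), ?_⟩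
    have htrace := blockFam.trace_list_prod_last_cons_map_castSucc hD A (w := List.ofFn idx)
      (by rwa [List.map_ofFn])
    simp only [List.map_cons, List.map_ofFn, Function.comp_def] at htrace
    simp only [List.ofFn_succ, Fin.cons_zero, Fin.cons_succ, Function.comp_apply, htrace]
    norm_num
  · rintro _ ⟨m, rfl, -, idx, hneg⟩
    rw [← Function.comp_def, ← List.map_ofFn] at hneg
    obtain ⟨w, hw, hlen, hzero⟩ := blockFam.exists_corner_eq_zero_of_trace_neg hD A hneg
    refine ⟨w.length, ⟨w.length, rfl, List.length_pos_iff.mpr hw, fun j => w[j], ?_⟩, ?_⟩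
    · simpa using hzero
    · rw [List.length_ofFn] at hlen
      exact_mod_cast hlen
end

section
/- Let B₁,…,B_k be D×D real matrices and, for α,β ∈ {1,…,D}, let q_{α,β}(x) = Σ_{j=1}^{k} (B_j)_{α,β} · x_j² on ℝ^k, and p_n(x⁽¹⁾,…,x⁽ⁿ⁾) = Σ_{α : Fin n → Fin D} ∏_{t=1}^{n} q_{α_t, α_{t+1}}(x⁽ᵗ⁾) with cyclic indices. Then for every n ≥ 1: p_n(x⁽¹⁾,…,x⁽ⁿ⁾) ≥ 0 for all x⁽¹⁾,…,x⁽ⁿ⁾ ∈ ℝ^k if and only if tr(B_{i₁}·B_{i₂}⋯B_{i_n}) ≥ 0 for all index sequences i₁,…,i_n ∈ {1,…,k}. -/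
/-- The polynomial `q_{α,β}(x) = Σⱼ (Bⱼ)_{α,β} · xⱼ²` on `ℝ^k`. -/
def qpoly {D k : ℕ} (B : Fin k → Matrix (Fin D) (Fin D) ℝ) (α β : Fin D)
    (x : Fin k → ℝ) : ℝ :=
  ∑ j : Fin k, B j α β * x j ^ 2

/-- The polynomial `p_n(x⁽¹⁾,…,x⁽ⁿ⁾) = Σ_α Π_t q_{α_t,α_{t+1}}(x⁽ᵗ⁾)` with cyclic
indices. -/
def ppoly {D k : ℕ} (B : Fin k → Matrix (Fin D) (Fin D) ℝ) (n : ℕ) [NeZero n]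
    (X : Fin n → Fin k → ℝ) : ℝ :=
  ∑ α : Fin n → Fin D, ∏ t : Fin n, qpoly B (α t) (α (t + 1)) (X t)


lemma prodOfFn_apply {D : ℕ} :
    ∀ (n : ℕ) (M : Fin n → Matrix (Fin D) (Fin D) ℝ) (a b : Fin D),
    (List.ofFn M).prod a b
      = ∑ α : Fin n → Fin D,
          (∏ t : Fin n, M t ((Fin.cons a α : Fin (n+1) → Fin D) t.castSucc) (α t))
            * (if (Fin.cons a α : Fin (n+1) → Fin D) (Fin.last n) = b then 1 else 0) := by
  intro n
  induction n with
  | zero =>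
    intro M a b
    simp [List.ofFn_zero, Matrix.one_apply]
  | succ n ih =>
    intro M a b
    rw [List.ofFn_succ, List.prod_cons, Matrix.mul_apply]
    simp_rw [ih (fun i => M i.succ)]
    rw [← (Fin.consEquiv fun _ => Fin D).sum_comp]
    rw [Fintype.sum_prod_type]
    refine Finset.sum_congr rfl fun c _ => ?_
    rw [Finset.mul_sum]
    refine Finset.sum_congr rfl fun β _ => ?_
    have hce : ((Fin.consEquiv fun _ => Fin D) (c, β) : Fin (n+1) → Fin D) = Fin.cons c β := rfl
    rw [hce, Fin.prod_univ_succ]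
    have h1 : (Fin.cons a (Fin.cons c β) : Fin (n+2) → Fin D) ((0 : Fin (n+1)).castSucc) = a := rfl
    have h2 : ∀ t : Fin n,
        (Fin.cons a (Fin.cons c β) : Fin (n+2) → Fin D) (t.succ.castSucc)
          = (Fin.cons c β : Fin (n+1) → Fin D) t.castSucc := by
      intro t
      rw [← Fin.succ_castSucc, Fin.cons_succ]
    have h3 : (Fin.cons a (Fin.cons c β) : Fin (n+2) → Fin D) (Fin.last (n+1))
        = (Fin.cons c β : Fin (n+1) → Fin D) (Fin.last n) := by
      rw [← Fin.succ_last, Fin.cons_succ]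
    simp only [h1, h2, h3, Fin.cons_zero, Fin.cons_succ]
    ring

lemma trace_ofFn_prod {D m : ℕ} (M : Fin (m+1) → Matrix (Fin D) (Fin D) ℝ) :
    Matrix.trace ((List.ofFn M).prod)
      = ∑ γ : Fin (m+1) → Fin D, ∏ t : Fin (m+1), M t (γ t) (γ (t + 1)) := by
  rw [Matrix.trace]
  simp only [Matrix.diag]
  simp_rw [prodOfFn_apply]
  rw [Finset.sum_comm]
  have hlast : ∀ (a : Fin D) (α : Fin (m+1) → Fin D),
      (Fin.cons a α : Fin (m+2) → Fin D) (Fin.last (m+1)) = α (Fin.last m) := by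
    intro a α; rw [← Fin.succ_last, Fin.cons_succ]
  simp_rw [hlast, mul_ite, mul_one, mul_zero]
  have hcollapse : ∀ α : Fin (m+1) → Fin D,
      (∑ a : Fin D, if α (Fin.last m) = a then
          (∏ t : Fin (m+1), M t ((Fin.cons a α : Fin (m+2) → Fin D) t.castSucc) (α t)) else 0)
        = ∏ t : Fin (m+1), M t ((Fin.cons (α (Fin.last m)) α : Fin (m+2) → Fin D) t.castSucc) (α t) := by
    intro α
    rw [Finset.sum_ite_eq]
    simp
  simp_rw [hcollapse]
  refine (Fintype.sum_equiv
    (Equiv.arrowCongr ((Equiv.addRight (1 : Fin (m+1))).symm) (Equiv.refl (Fin D)))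
    _ _ fun γ => ?_).symm
  have hg : (Equiv.arrowCongr ((Equiv.addRight (1 : Fin (m+1))).symm)
      (Equiv.refl (Fin D)) γ) = fun t => γ (t + 1) := rfl
  rw [hg]
  have hlast0 : γ (Fin.last m + 1) = γ 0 := by rw [Fin.last_add_one]
  refine Finset.prod_congr rfl fun t _ => ?_
  show M t (γ t) (γ (t + 1))
      = M t ((Fin.cons (γ (Fin.last m + 1)) (fun s => γ (s + 1)) : Fin (m+2) → Fin D) t.castSucc)
          (γ (t + 1))
  rw [hlast0]
  congr 1
  symm
  refine Fin.cases ?_ (fun s => ?_) t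
  · simp
  · rw [← Fin.succ_castSucc, Fin.cons_succ, Fin.coeSucc_eq_succ]

lemma ppoly_eq {D k : ℕ} (B : Fin k → Matrix (Fin D) (Fin D) ℝ) (n : ℕ) [NeZero n]
    (X : Fin n → Fin k → ℝ) :
    ppoly B n X = ∑ idx : Fin n → Fin k,
      (∏ t : Fin n, X t (idx t) ^ 2)
        * Matrix.trace ((List.ofFn fun t => B (idx t)).prod) := by
  obtain ⟨m, rfl⟩ := Nat.exists_eq_succ_of_ne_zero (NeZero.ne n)
  simp_rw [trace_ofFn_prod]
  unfold ppoly qpoly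
  simp_rw [Finset.prod_univ_sum fun _ => (Finset.univ : Finset (Fin k)), Fintype.piFinset_univ]
  rw [Finset.sum_comm]
  refine Finset.sum_congr rfl fun idx _ => ?_
  rw [Finset.mul_sum]
  refine Finset.sum_congr rfl fun α _ => ?_
  rw [Finset.prod_mul_distrib]
  ring

theorem ppoly_nonneg_iff_traces_nonneg {D k : ℕ}
    (B : Fin k → Matrix (Fin D) (Fin D) ℝ) (n : ℕ) [NeZero n] :
    (∀ X : Fin n → Fin k → ℝ, 0 ≤ ppoly B n X) ↔
      ∀ idx : Fin n → Fin k,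
        0 ≤ Matrix.trace ((List.ofFn fun t => B (idx t)).prod) := by
  constructor
  · intro h idx
    have := h (fun t j => if j = idx t then 1 else 0)
    rw [ppoly_eq] at this
    have hcol : (∑ idx' : Fin n → Fin k,
        (∏ t : Fin n, (if idx' t = idx t then (1:ℝ) else 0) ^ 2)
          * Matrix.trace ((List.ofFn fun t => B (idx' t)).prod))
        = Matrix.trace ((List.ofFn fun t => B (idx t)).prod) := by
      rw [Finset.sum_eq_single idx]
      · simp
      · intro idx' _ hne
        obtain ⟨t, ht⟩ := Function.ne_iff.mp hne
        rw [Finset.prod_eq_zero (Finset.mem_univ t) (by simp [ht]), zero_mul]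
      · simp
    rwa [hcol] at this
  · intro h X
    rw [ppoly_eq]
    exact Finset.sum_nonneg fun idx _ =>
      mul_nonneg (Finset.prod_nonneg fun t _ => sq_nonneg _) (h idx)
end

section
/- Let D ≥ 1 and let B₁,…,B_k be matrices indexed by (Fin D × Fin D), i.e., B_i ∈ Matrix (Fin D × Fin D) (Fin D × Fin D) ℚ. Define C_i ∈ Matrix (Fin D × Fin D) (Fin D × Fin D) ℚ by the reshuffling (C_i)_{(α₁,α₂),(β₁,β₂)} = (B_i)_{(α₁,β₁),(α₂,β₂)}. Then for every n ≥ 1 and every index sequence i₁,…,i_n ∈ {1,…,k}: Σ_{j, j' : Fin n → Fin D} ∏_{t=1}^{n} (C_{i_t})_{(j_t, j_{t+1}), (j'_t, j'_{t+1})} = tr(B_{i₁}·B_{i₂}⋯B_{i_n}), where indices are cyclic (j_{n+1} = j₁, j'_{n+1} = j'₁). Equivalently, ⟨χ_n| C_{i₁}⊗⋯⊗C_{i_n} |χ_n⟩ = tr(B_{i₁}⋯B_{i_n}) for the matrix-multiplication vector |χ_n⟩ = Σ_{j₁,…,j_n} |j₁ j₂⟩⊗⋯⊗|j_n j₁⟩.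 -/
/-!
Expanding a product of matrices entrywise writes `tr (M₀ ⋯ M_{n-1})` as a sum over closed paths
`f : Fin n → ι` of `∏ₜ Mₜ (f t) (f (t + 1))`. With `ι = Fin D × Fin D`, a closed path is a pair
`(j, j')` of closed paths in `Fin D`, and the reshuffled entry at `(j t, j (t+1)), (j' t, j' (t+1))`
is exactly the entry of `B` at `(j t, j' t), (j (t+1), j' (t+1))`.
-/

/-- The reshuffling `(C)_{(α₁,α₂),(β₁,β₂)} = (B)_{(α₁,β₁),(α₂,β₂)}`. -/
def reshuffle {D : ℕ} (B : Matrix (Fin D × Fin D) (Fin D × Fin D) ℚ) :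
    Matrix (Fin D × Fin D) (Fin D × Fin D) ℚ :=
  Matrix.of fun p q => B (p.1, q.1) (p.2, q.2)

theorem Fin.snoc_self_zero_succ {α : Type*} {m : ℕ} (g : Fin (m + 1) → α) (i : Fin (m + 1)) :
    (Fin.snoc g (g 0) : Fin (m + 2) → α) i.succ = g (i + 1) := by
  induction i using Fin.lastCases with
  | last => rw [Fin.succ_last, Fin.snoc_last, Fin.last_add_one]
  | cast i => rw [Fin.succ_castSucc, Fin.snoc_castSucc, Fin.coeSucc_eq_succ]

namespace Matrix

variable {ι R : Type*} [Fintype ι] [DecidableEq ι] [CommSemiring R]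

theorem dotProduct_list_prod_ofFn_mulVec {n : ℕ} (M : Fin n → Matrix ι ι R) (w v : ι → R) :
    w ⬝ᵥ ((List.ofFn M).prod *ᵥ v) =
      ∑ f : Fin (n + 1) → ι,
        w (f 0) * (∏ t : Fin n, M t (f t.castSucc) (f t.succ)) * v (f (Fin.last n)) := by
  induction n generalizing w with
  | zero =>
    rw [← (Equiv.funUnique (Fin 1) ι).symm.sum_comp]
    simp [dotProduct]
  | succ n ih =>
    rw [List.ofFn_succ, List.prod_cons, ← mulVec_mulVec, dotProduct_mulVec, ih,
      ← (Fin.consEquiv fun _ : Fin (n + 2) => ι).sum_comp, Fintype.sum_prod_type, Finset.sum_comm]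
    refine Finset.sum_congr rfl fun g _ => ?_
    simp only [vecMul, dotProduct, Finset.sum_mul, Fin.consEquiv_apply, Fin.prod_univ_succ]
    refine Finset.sum_congr rfl fun a _ => ?_
    simp only [Fin.cons_zero, Fin.castSucc_zero, ← Fin.succ_castSucc,
      Fin.cons_succ, ← Fin.succ_last]
    ring

theorem list_prod_ofFn_apply {n : ℕ} (M : Fin n → Matrix ι ι R) (a b : ι) :
    (List.ofFn M).prod a b =
      ∑ f : Fin (n + 1) → ι,
        if f 0 = a ∧ f (Fin.last n) = b then ∏ t : Fin n, M t (f t.castSucc) (f t.succ) else 0 := by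
  have h := dotProduct_list_prod_ofFn_mulVec M (Pi.single a 1) (Pi.single b 1)
  rw [single_dotProduct, mulVec_single_one, one_mul, col_apply] at h
  rw [h]
  refine Finset.sum_congr rfl fun f _ => ?_
  simp only [Pi.single_apply, ite_and]
  split_ifs <;> simp

theorem trace_list_prod_ofFn {n : ℕ} [NeZero n] (M : Fin n → Matrix ι ι R) :
    trace (List.ofFn M).prod = ∑ f : Fin n → ι, ∏ t : Fin n, M t (f t) (f (t + 1)) := by
  obtain ⟨m, rfl⟩ : ∃ m, n = m + 1 := Nat.exists_eq_add_one.mpr (NeZero.pos n)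
  simp only [trace, diag, list_prod_ofFn_apply]
  rw [Finset.sum_comm, ← (Fin.snocEquiv fun _ : Fin (m + 2) => ι).sum_comp,
    Fintype.sum_prod_type_right]
  refine Finset.sum_congr rfl fun g _ => ?_
  have h0 : ∀ x, (Fin.snoc g x : Fin (m + 2) → ι) 0 = g 0 := fun x => Fin.snoc_castSucc (i := 0) ..
  simp only [Fin.snocEquiv_apply, h0, Fin.snoc_last, ite_and, Finset.sum_ite_eq, Finset.sum_ite_eq',
    Finset.mem_univ, if_true, Fin.snoc_castSucc, Fin.snoc_self_zero_succ]

end Matrix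

theorem reshuffle_chi_eq_trace_general {D k : ℕ}
    (B : Fin k → Matrix (Fin D × Fin D) (Fin D × Fin D) ℚ)
    (n : ℕ) [NeZero n] (idx : Fin n → Fin k) :
    (∑ j : Fin n → Fin D, ∑ j' : Fin n → Fin D,
        ∏ t : Fin n,
          reshuffle (B (idx t)) (j t, j (t + 1)) (j' t, j' (t + 1))) =
      Matrix.trace ((List.ofFn fun t => B (idx t)).prod) := by
  rw [Matrix.trace_list_prod_ofFn, ← Fintype.sum_prod_type',
    ← (Equiv.arrowProdEquivProdArrow (Fin n) (fun _ => Fin D) (fun _ => Fin D)).sum_comp]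
  rfl

theorem reshuffle_chi_eq_trace {D k : ℕ} (hD : 1 ≤ D)
    (B : Fin k → Matrix (Fin D × Fin D) (Fin D × Fin D) ℚ)
    (n : ℕ) [NeZero n] (idx : Fin n → Fin k) :
    (∑ j : Fin n → Fin D, ∑ j' : Fin n → Fin D,
        ∏ t : Fin n,
          reshuffle (B (idx t)) (j t, j (t + 1)) (j' t, j' (t + 1))) =
      Matrix.trace ((List.ofFn fun t => B (idx t)).prod) :=
  reshuffle_chi_eq_trace_general B n idx
end
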